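/- Let F ∈ ℂ, k ∈ ℤ∖{0}, a ∈ ℂ∖{0}, m ∈ ℂ, and let b ∈ ℂ satisfy kb = 1. On V define linear operators 𝕃_n, 𝕀_n by 𝕃_n(v_t) = t·v_{n+t} for t ≠ −n, 𝕃_n(v_{−n}) = 0, 𝕀_n(v_t) = 0 for t ≠ −n, 𝕀_n(v_{−n}) = nF·v_0, and define the linear map φ by φ(v_t) = aᵗ·m·v_{kt}. Then for all n ∈ ℤ: φ ∘ 𝕃_n = (1/k)aⁿ·𝕃_{kn} ∘ φ and φ ∘ 𝕀_n = aⁿb·𝕀_{kn} ∘ φ; consequently (φ∘𝕃_n)(v_t) = t·a^{n+t}·m·v_{k(n+t)} for t ≠ −n, (φ∘𝕃_n)(v_{−n}) = 0, (φ∘𝕀_n)(v_t) = 0 for t ≠ −n, and (φ∘𝕀_n)(v_{−n}) = nF·m·v_0. -/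

import Mathlib

/-- The ℂ-vector space with basis `{v t : t ∈ ℤ}` (finitely supported functions ℤ → ℂ). -/
abbrev V : Type := ℤ →₀ ℂ

/-- The basis vector `v t`. -/
noncomputable def v (t : ℤ) : V := Finsupp.single t 1

/-- The linear operator on `V` determined by its values on the basis vectors. -/
noncomputable def op (f : ℤ → V) : V →ₗ[ℂ] V := Finsupp.lift V ℂ ℤ f

/-- The operator `𝕃 n` of the module `Ũ_F`:
`𝕃 n (v t) = t v (n+t)` for `t ≠ -n`, `𝕃 n (v (-n)) = 0`. -/
noncomputable def Lop (n : ℤ) : V →ₗ[ℂ] V :=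
  op fun t => if t = -n then 0 else (t : ℂ) • v (n + t)

/-- The operator `𝕀 n` of the module `Ũ_F`:
`𝕀 n (v t) = 0` for `t ≠ -n`, `𝕀 n (v (-n)) = nF • v 0`. -/
noncomputable def Iop (F : ℂ) (n : ℤ) : V →ₗ[ℂ] V :=
  op fun t => if t = -n then ((n : ℂ) * F) • v 0 else 0

/-- The twisting linear map `φ (v t) = aᵗ m • v (kt)`. -/
noncomputable def φmap (a m : ℂ) (k : ℤ) : V →ₗ[ℂ] V :=
  op fun t => (a ^ t * m) • v (k * t)

/-! On a basis vector `v t` both sides of each identity are multiples of `v (k * (n + t))`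
(resp. `v 0`), and since `k ≠ 0` we have `k * t = -(k * n)` exactly when `t = -n`, so the two
sides vanish on the same basis vectors. The remaining coefficients agree by `aⁿ⁺ᵗ = aⁿ aᵗ` and
`k b = 1`. -/

lemma op_v (f : ℤ → V) (t : ℤ) : op f (v t) = f t := by
  rw [op, v, Finsupp.lift_apply, Finsupp.sum_single_index (by rw [zero_smul]), one_smul]

lemma linearMap_ext_v {M : Type*} [AddCommMonoid M] [Module ℂ M] {g h : V →ₗ[ℂ] M}
    (H : ∀ t, g (v t) = h (v t)) : g = h :=
  Finsupp.lhom_ext' fun t => LinearMap.ext_ring (H t)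

@[simp]
lemma φmap_v (a m : ℂ) (k t : ℤ) : φmap a m k (v t) = (a ^ t * m) • v (k * t) :=
  op_v _ t

@[simp]
lemma Lop_v_neg (n : ℤ) : Lop n (v (-n)) = 0 := by
  rw [Lop, op_v, if_pos rfl]

lemma Lop_v_of_ne {n t : ℤ} (h : t ≠ -n) : Lop n (v t) = (t : ℂ) • v (n + t) := by
  rw [Lop, op_v, if_neg h]

@[simp]
lemma Iop_v_neg (F : ℂ) (n : ℤ) : Iop F n (v (-n)) = ((n : ℂ) * F) • v 0 := by
  rw [Iop, op_v, if_pos rfl]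

lemma Iop_v_of_ne (F : ℂ) {n t : ℤ} (h : t ≠ -n) : Iop F n (v t) = 0 := by
  rw [Iop, op_v, if_neg h]

lemma mul_ne_neg_mul {k n t : ℤ} (hk : k ≠ 0) (h : t ≠ -n) : k * t ≠ -(k * n) := by
  rwa [← mul_neg, Ne, mul_right_inj' hk]

section

variable {a m : ℂ} {k : ℤ}

lemma φmap_Lop_v_of_ne {n t : ℤ} (h : t ≠ -n) :
    φmap a m k (Lop n (v t)) = ((t : ℂ) * a ^ (n + t) * m) • v (k * (n + t)) := by
  rw [Lop_v_of_ne h, map_smul, φmap_v, smul_smul, mul_assoc]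

lemma φmap_Iop_v_neg (F : ℂ) (n : ℤ) :
    φmap a m k (Iop F n (v (-n))) = ((n : ℂ) * F * m) • v 0 := by
  rw [Iop_v_neg, map_smul, φmap_v, smul_smul, zpow_zero, one_mul, mul_zero]

lemma φmap_comp_Lop (hk : k ≠ 0) (ha : a ≠ 0) (n : ℤ) :
    φmap a m k ∘ₗ Lop n = ((1 / (k : ℂ) * a ^ n) • Lop (k * n)) ∘ₗ φmap a m k := by
  refine linearMap_ext_v fun t => ?_
  simp only [LinearMap.comp_apply, LinearMap.smul_apply, φmap_v, map_smul]
  by_cases h : t = -n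
  · subst h
    rw [Lop_v_neg, map_zero, mul_neg, Lop_v_neg, smul_zero, smul_zero]
  · rw [φmap_Lop_v_of_ne h, Lop_v_of_ne (mul_ne_neg_mul hk h), smul_smul, smul_smul, ← mul_add,
      zpow_add₀ ha]
    congr 1
    push_cast
    field_simp

lemma φmap_comp_Iop (F b : ℂ) (hb : (k : ℂ) * b = 1) (ha : a ≠ 0) (n : ℤ) :
    φmap a m k ∘ₗ Iop F n = ((a ^ n * b) • Iop F (k * n)) ∘ₗ φmap a m k := by
  have hk : k ≠ 0 := Int.cast_ne_zero.mp (left_ne_zero_of_mul_eq_one hb)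
  refine linearMap_ext_v fun t => ?_
  simp only [LinearMap.comp_apply, LinearMap.smul_apply, φmap_v, map_smul]
  by_cases h : t = -n
  · subst h
    rw [φmap_Iop_v_neg, mul_neg, Iop_v_neg, smul_smul, smul_smul]
    congr 1
    have hpow : a ^ n * a ^ (-n) = 1 := by rw [← zpow_add₀ ha, add_neg_cancel, zpow_zero]
    push_cast
    linear_combination (-(n : ℂ) * F * m) * hb - b * m * k * n * F * hpow
  · rw [Iop_v_of_ne F h, map_zero, Iop_v_of_ne F (mul_ne_neg_mul hk h), smul_zero, smul_zero]

end

theorem tildeU_F_intertwine (F : ℂ) (k : ℤ) (hk : k ≠ 0) (a : ℂ) (ha : a ≠ 0)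
    (m b : ℂ) (hb : (k : ℂ) * b = 1) :
    (∀ n : ℤ, φmap a m k ∘ₗ Lop n
        = ((1 / (k : ℂ) * a ^ n) • Lop (k * n)) ∘ₗ φmap a m k) ∧
    (∀ n : ℤ, φmap a m k ∘ₗ Iop F n = ((a ^ n * b) • Iop F (k * n)) ∘ₗ φmap a m k) ∧
    (∀ n t : ℤ, t ≠ -n → φmap a m k (Lop n (v t))
        = ((t : ℂ) * a ^ (n + t) * m) • v (k * (n + t))) ∧
    (∀ n : ℤ, φmap a m k (Lop n (v (-n))) = 0) ∧
    (∀ n t : ℤ, t ≠ -n → φmap a m k (Iop F n (v t)) = 0) ∧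
    (∀ n : ℤ, φmap a m k (Iop F n (v (-n))) = ((n : ℂ) * F * m) • v 0) :=
  ⟨φmap_comp_Lop hk ha, φmap_comp_Iop F b hb ha, fun _ _ => φmap_Lop_v_of_ne,
    fun n => by rw [Lop_v_neg, map_zero],
    fun _ _ h => by rw [Iop_v_of_ne F h, map_zero], φmap_Iop_v_neg F⟩
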